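/- Let v = (1,1,1,1,1,1,1,5)/(4√2) ∈ ℝ^8 and ρ = v vᵀ. Then the minimum over all diagonal matrices δ = diag(x₁,…,x₈) with xᵢ ≥ 0 and Σxᵢ = 1 of ‖ρ - δ‖_F equals 7√2/16, attained at xᵢ = 1/32 for i = 1,…,7 and x₈ = 25/32. -/
import Mathlib


open Matrix

/-- Frobenius norm of a real square matrix. -/
noncomputable def frob {n : ℕ} (A : Matrix (Fin n) (Fin n) ℝ) : ℝ :=
  Real.sqrt (Matrix.trace (Aᵀ * A))

/-- Grover state after the first diffuser step, `v = (1,…,1,5)/(4√2)`. -/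
noncomputable def grover2 : Fin 8 → ℝ := fun i =>
  (if i = 7 then 5 else 1) / (4 * Real.sqrt 2)

lemma g2mul (i j : Fin 8) : grover2 i * grover2 j =
    ((if i = 7 then 5 else 1) * (if j = 7 then (5:ℝ) else 1)) / 32 := by
  have h2 : Real.sqrt 2 * Real.sqrt 2 = 2 := Real.mul_self_sqrt (by norm_num)
  have h : (4 * Real.sqrt 2) * (4 * Real.sqrt 2) = 32 := by nlinarith
  unfold grover2
  rw [div_mul_div_comm, h]

set_option maxHeartbeats 2000000 in
lemma key (x : Fin 8 → ℝ) :
    Matrix.trace ((Matrix.vecMulVec grover2 grover2 - Matrix.diagonal x)ᵀ *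
      (Matrix.vecMulVec grover2 grover2 - Matrix.diagonal x)) =
    49/128 + ∑ i : Fin 8, ((if i = (7:Fin 8) then (25:ℝ)/32 else 1/32) - x i)^2 := by
  simp only [Matrix.trace, Matrix.diag_apply, Matrix.mul_apply, Matrix.transpose_apply,
    Matrix.sub_apply, Matrix.vecMulVec_apply, Matrix.diagonal_apply, g2mul,
    Fin.sum_univ_eight]
  simp (config := { decide := true }) only [if_true, if_false]
  norm_num
  ring

lemma sqrt49 : Real.sqrt (49/128) = 7 * Real.sqrt 2 / 16 := by
  have h2 : Real.sqrt 2 * Real.sqrt 2 = 2 := Real.mul_self_sqrt (by norm_num)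
  rw [show (49:ℝ)/128 = (7 * Real.sqrt 2 / 16)^2 by nlinarith]
  exact Real.sqrt_sq (by positivity)

theorem stmt1 :
    IsLeast { d : ℝ | ∃ x : Fin 8 → ℝ, (∀ i, 0 ≤ x i) ∧ (∑ i, x i) = 1 ∧
        d = frob (Matrix.vecMulVec grover2 grover2 - Matrix.diagonal x) }
      (7 * Real.sqrt 2 / 16) ∧
    frob (Matrix.vecMulVec grover2 grover2 -
        Matrix.diagonal (fun i => if i = 7 then 25 / 32 else 1 / 32))
      = 7 * Real.sqrt 2 / 16 := by
  have hval : frob (Matrix.vecMulVec grover2 grover2 -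
      Matrix.diagonal (fun i => if i = 7 then (25:ℝ) / 32 else 1 / 32))
      = 7 * Real.sqrt 2 / 16 := by
    unfold frob
    rw [key]
    rw [show (∑ i : Fin 8, ((if i = (7:Fin 8) then (25:ℝ)/32 else 1/32) -
        (fun i => if i = (7:Fin 8) then (25:ℝ)/32 else 1/32) i)^2) = 0 by
      simp]
    rw [add_zero, sqrt49]
  refine ⟨⟨⟨fun i => if i = 7 then 25/32 else 1/32, fun i => by positivity, by
      simp [Fin.sum_univ_eight]; norm_num, hval.symm⟩, ?_⟩, hval⟩
  rintro d ⟨x, -, -, rfl⟩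
  unfold frob
  rw [key, ← sqrt49]
  apply Real.sqrt_le_sqrt
  have : 0 ≤ ∑ i : Fin 8, ((if i = (7:Fin 8) then (25:ℝ)/32 else 1/32) - x i)^2 :=
    Finset.sum_nonneg fun i _ => sq_nonneg _
  linarith
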